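/- There is an absolute constant C such that for every δ ∈ (0,1), all Schwartz functions f, g on ℝ, and all λ > 0, the set E_λ = { x ∈ ℝ : 𝔐_δ(f,g)(x) ≥ λ } satisfies |E_λ| ≤ C · δ^{-1/2} · λ^{-1} · ‖f‖_{L²(ℝ)} ‖g‖_{L²(ℝ)}. -/

import Mathlib

open MeasureTheory Set Real
open scoped ENNReal NNReal

/-- The closed rectangle in `ℝ²` with given center, whose sides of length `a`
point in direction `(cos θ, sin θ)` and whose sides of length `b` point in the
orthogonal direction `(-sin θ, cos θ)`. -/
def rect (center : ℝ × ℝ) (θ a b : ℝ) : Set (ℝ × ℝ) :=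
  {p | ∃ s t : ℝ, |s| ≤ a / 2 ∧ |t| ≤ b / 2 ∧
    p = (center.1 + s * Real.cos θ - t * Real.sin θ,
         center.2 + s * Real.sin θ + t * Real.cos θ)}

/-- Average of a nonnegative function over a set in `ℝ²`. -/
noncomputable def avgOn (R : Set (ℝ × ℝ)) (F : ℝ × ℝ → ℝ≥0∞) : ℝ≥0∞ :=
  (∫⁻ p in R, F p) / volume R

/-- The bilinear Kakeya-type maximal operator: the supremum, over all `1 × δ`
rectangles centered at `(x, x)` whose longest side points along a direction
(angle) in `Ω`, of the average of `|f(y) g(z)|` over the rectangle. -/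
noncomputable def kakeyaMax (Ω : Set ℝ) (δ : ℝ) (f g : ℝ → ℂ) (x : ℝ) : ℝ≥0∞ :=
  ⨆ θ ∈ Ω, avgOn (rect (x, x) θ 1 δ) (fun p => (‖f p.1 * g p.2‖₊ : ℝ≥0∞))

/-!
Cauchy–Schwarz on a `1 × δ` rectangle `R` centred at `(x, x)` bounds `∫_R |f(y)| |g(z)|` by
`(ℓ₁ ℓ₂)^{1/2} ‖f‖_{L²(I)} ‖g‖_{L²(I)}`, where `I = [x - 1, x + 1]` contains both projections of
`R` and `ℓ₁`, `ℓ₂` bound the lengths of its vertical and horizontal slices. Whichever of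
`|sin θ|`, `|cos θ|` is at least `1/√2` gives `ℓ₁ ℓ₂ ≤ 2δ`, while `|R| = δ`, so
`𝔐_δ(f,g)(x) ≤ (2/δ)^{1/2} ‖f‖_{L²(I)} ‖g‖_{L²(I)}` whatever the direction. Cauchy–Schwarz in `x`
and `∫ ‖f‖²_{L²([x-1,x+1])} dx = 2 ‖f‖₂²` bound the integral of the right-hand side by
`2 (2/δ)^{1/2} ‖f‖₂ ‖g‖₂`, and Chebyshev's inequality concludes.
-/

lemma eLpNorm_two_rpow_two {α ε : Type*} [MeasurableSpace α] [ENorm ε] (f : α → ε)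
    (μ : Measure α) : eLpNorm f 2 μ ^ (2 : ℝ) = ∫⁻ x, ‖f x‖ₑ ^ (2 : ℝ) ∂μ := by
  simpa using eLpNorm_nnreal_pow_eq_lintegral (f := f) (μ := μ) (p := 2) two_ne_zero

lemma eLpNorm_two_eq {α ε : Type*} [MeasurableSpace α] [ENorm ε] (f : α → ε)
    (μ : Measure α) : eLpNorm f 2 μ = (∫⁻ x, ‖f x‖ₑ ^ (2 : ℝ) ∂μ) ^ (1 / 2 : ℝ) := by
  simpa using eLpNorm_nnreal_eq_lintegral (f := f) (μ := μ) (p := 2) two_ne_zero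

section SliceBounds

variable {α β : Type*} [MeasurableSpace α] [MeasurableSpace β] {μ : Measure α} {ν : Measure β}

lemma setLIntegral_comp_fst_le [SFinite ν] {S : Set (α × β)} (hS : MeasurableSet S) {I : Set α}
    (hSI : ∀ p ∈ S, p.1 ∈ I) {a : ℝ≥0∞} (ha : ∀ y, ν (Prod.mk y ⁻¹' S) ≤ a)
    {F : α → ℝ≥0∞} (hF : Measurable F) :
    ∫⁻ p in S, F p.1 ∂μ.prod ν ≤ a * ∫⁻ y in I, F y ∂μ := by
  have hslice : ∀ y, y ∉ I → Prod.mk y ⁻¹' S = ∅ := fun y hy =>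
    eq_empty_of_forall_notMem fun z hz => hy (hSI _ hz)
  calc ∫⁻ p in S, F p.1 ∂μ.prod ν = ∫⁻ y, F y * ν (Prod.mk y ⁻¹' S) ∂μ := by
        have hFS : Measurable (S.indicator fun p : α × β => F p.1) :=
          (hF.comp measurable_fst).indicator hS
        rw [← lintegral_indicator hS, lintegral_prod _ hFS.aemeasurable]
        refine lintegral_congr fun y => ?_
        rw [← lintegral_indicator_const (measurable_prodMk_left hS)]
        rfl
    _ = ∫⁻ y in I, F y * ν (Prod.mk y ⁻¹' S) ∂μ := by
        refine (setLIntegral_eq_of_support_subset fun y hy => ?_).symm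
        by_contra hyI
        simp [hslice y hyI] at hy
    _ ≤ ∫⁻ y in I, F y * a ∂μ := by gcongr with y; exact ha y
    _ = a * ∫⁻ y in I, F y ∂μ := by rw [lintegral_mul_const _ hF, mul_comm]

lemma setLIntegral_comp_snd_le [SFinite μ] [SFinite ν] {S : Set (α × β)} (hS : MeasurableSet S)
    {J : Set β} (hSJ : ∀ p ∈ S, p.2 ∈ J) {b : ℝ≥0∞} (hb : ∀ z, μ ((·, z) ⁻¹' S) ≤ b)
    {G : β → ℝ≥0∞} (hG : Measurable G) :
    ∫⁻ p in S, G p.2 ∂μ.prod ν ≤ b * ∫⁻ z in J, G z ∂ν := by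
  rw [← (Measure.measurePreserving_swap (μ := ν) (ν := μ)).setLIntegral_comp_preimage_emb
    MeasurableEquiv.prodComm.measurableEmbedding (fun p => G p.2)]
  exact setLIntegral_comp_fst_le (measurable_swap hS) (fun p hp => hSJ _ hp) hb hG

lemma setLIntegral_mul_le_of_slices [SFinite μ] [SFinite ν] {S : Set (α × β)}
    (hS : MeasurableSet S) {I : Set α} {J : Set β} (hSIJ : S ⊆ I ×ˢ J) {a b : ℝ≥0∞}
    (ha : ∀ y, ν (Prod.mk y ⁻¹' S) ≤ a) (hb : ∀ z, μ ((·, z) ⁻¹' S) ≤ b)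
    {F : α → ℝ≥0∞} {G : β → ℝ≥0∞} (hF : Measurable F) (hG : Measurable G) :
    ∫⁻ p in S, F p.1 * G p.2 ∂μ.prod ν ≤
      (a * b) ^ (1 / 2 : ℝ) * (eLpNorm F 2 (μ.restrict I) * eLpNorm G 2 (ν.restrict J)) := by
  have hsqrt : ∀ c : ℝ≥0∞, (c ^ (2 : ℝ)) ^ (1 / 2 : ℝ) = c := fun c => by
    rw [← ENNReal.rpow_mul]; norm_num
  calc ∫⁻ p in S, F p.1 * G p.2 ∂μ.prod ν
      ≤ (∫⁻ p in S, F p.1 ^ (2 : ℝ) ∂μ.prod ν) ^ (1 / 2 : ℝ) *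
          (∫⁻ p in S, G p.2 ^ (2 : ℝ) ∂μ.prod ν) ^ (1 / 2 : ℝ) :=
        ENNReal.lintegral_mul_le_Lp_mul_Lq _ .two_two (by fun_prop) (by fun_prop)
    _ ≤ (a * eLpNorm F 2 (μ.restrict I) ^ (2 : ℝ)) ^ (1 / 2 : ℝ) *
          (b * eLpNorm G 2 (ν.restrict J) ^ (2 : ℝ)) ^ (1 / 2 : ℝ) := by
        simp only [eLpNorm_two_rpow_two, enorm_eq_self]
        gcongr
        · exact setLIntegral_comp_fst_le hS (fun p hp => (hSIJ hp).1) ha (by fun_prop)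
        · exact setLIntegral_comp_snd_le hS (fun p hp => (hSIJ hp).2) hb (by fun_prop)
    _ = (a * b) ^ (1 / 2 : ℝ) * (eLpNorm F 2 (μ.restrict I) * eLpNorm G 2 (ν.restrict J)) := by
        simp only [ENNReal.mul_rpow_of_nonneg _ _ (by norm_num : (0 : ℝ) ≤ 1 / 2), hsqrt]
        ring

end SliceBounds


section LocalL2

variable {F : ℝ → ℝ≥0∞}

lemma measurable_setLIntegral_closedBall (hF : Measurable F) (r : ℝ) :
    Measurable fun x => ∫⁻ y in Metric.closedBall x r, F y := by
  have hD : MeasurableSet {p : ℝ × ℝ | dist p.2 p.1 ≤ r} :=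
    measurableSet_le (by fun_prop) measurable_const
  simp_rw [← lintegral_indicator measurableSet_closedBall]
  exact ((hF.comp measurable_snd).indicator hD).lintegral_prod_right'

lemma lintegral_setLIntegral_closedBall (hF : Measurable F) (r : ℝ) :
    ∫⁻ x, ∫⁻ y in Metric.closedBall x r, F y = ENNReal.ofReal (2 * r) * ∫⁻ y, F y := by
  have hD : MeasurableSet {p : ℝ × ℝ | dist p.1 p.2 ≤ r} :=
    measurableSet_le (by fun_prop) measurable_const
  have hswap : ∀ x y, (Metric.closedBall x r).indicator F y =
      (Metric.closedBall y r).indicator (fun _ => F y) x := fun x y => by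
    simp [indicator, Metric.mem_closedBall, dist_comm]
  calc ∫⁻ x, ∫⁻ y in Metric.closedBall x r, F y
      = ∫⁻ x, ∫⁻ y, (Metric.closedBall y r).indicator (fun _ => F y) x := by
        simp_rw [← lintegral_indicator measurableSet_closedBall, hswap]
    _ = ∫⁻ y, ∫⁻ x, (Metric.closedBall y r).indicator (fun _ => F y) x :=
        lintegral_lintegral_swap ((hF.comp measurable_snd).indicator hD).aemeasurable
    _ = ENNReal.ofReal (2 * r) * ∫⁻ y, F y := by
        simp_rw [lintegral_indicator_const measurableSet_closedBall,
          Real.volume_closedBall]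
        rw [lintegral_mul_const _ hF, mul_comm]

end LocalL2

noncomputable def localL2Norm (f : ℝ → ℂ) (r x : ℝ) : ℝ≥0∞ :=
  eLpNorm f 2 (volume.restrict (Metric.closedBall x r))

lemma measurable_localL2Norm {f : ℝ → ℂ} (hf : Measurable f) (r : ℝ) :
    Measurable (localL2Norm f r) := by
  unfold localL2Norm
  simp_rw [eLpNorm_two_eq]
  exact (measurable_setLIntegral_closedBall (by fun_prop) r).pow_const _

lemma lintegral_localL2Norm_rpow_two {f : ℝ → ℂ} (hf : Measurable f) (r : ℝ) :
    ∫⁻ x, localL2Norm f r x ^ (2 : ℝ) = ENNReal.ofReal (2 * r) * eLpNorm f 2 volume ^ (2 : ℝ) := by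
  simp_rw [localL2Norm, eLpNorm_two_rpow_two]
  exact lintegral_setLIntegral_closedBall (by fun_prop) r

lemma lintegral_localL2Norm_mul_le {f g : ℝ → ℂ} (hf : Measurable f) (hg : Measurable g)
    (r : ℝ) :
    ∫⁻ x, localL2Norm f r x * localL2Norm g r x ≤
      ENNReal.ofReal (2 * r) * (eLpNorm f 2 volume * eLpNorm g 2 volume) := by
  calc ∫⁻ x, localL2Norm f r x * localL2Norm g r x
      ≤ (∫⁻ x, localL2Norm f r x ^ (2 : ℝ)) ^ (1 / 2 : ℝ) *
          (∫⁻ x, localL2Norm g r x ^ (2 : ℝ)) ^ (1 / 2 : ℝ) :=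
        ENNReal.lintegral_mul_le_Lp_mul_Lq _ .two_two
          (measurable_localL2Norm hf r).aemeasurable (measurable_localL2Norm hg r).aemeasurable
    _ = ((ENNReal.ofReal (2 * r) * (eLpNorm f 2 volume * eLpNorm g 2 volume)) ^ (2 : ℝ)) ^
          (1 / 2 : ℝ) := by
        rw [lintegral_localL2Norm_rpow_two hf, lintegral_localL2Norm_rpow_two hg,
          ← ENNReal.mul_rpow_of_nonneg _ _ (by norm_num), ENNReal.rpow_two, ENNReal.rpow_two,
          ENNReal.rpow_two]
        congr 1
        ring
    _ = _ := by rw [← ENNReal.rpow_mul]; norm_num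

lemma volume_le_of_le_localL2Norm_mul {f g : ℝ → ℂ} (hf : Measurable f) (hg : Measurable g)
    {r K : ℝ} (hK : 0 < K) {M : ℝ → ℝ≥0∞}
    (hM : ∀ x, M x ≤ ENNReal.ofReal K * (localL2Norm f r x * localL2Norm g r x))
    {lam : ℝ} (hlam : 0 < lam) :
    volume {x | ENNReal.ofReal lam ≤ M x} ≤
      ENNReal.ofReal (2 * r * K / lam) * (eLpNorm f 2 volume * eLpNorm g 2 volume) := by
  have ht : 0 < lam / K := by positivity
  calc volume {x | ENNReal.ofReal lam ≤ M x}
      ≤ volume {x | ENNReal.ofReal (lam / K) ≤ localL2Norm f r x * localL2Norm g r x} := by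
        refine measure_mono fun x (hx : ENNReal.ofReal lam ≤ M x) => ?_
        show ENNReal.ofReal (lam / K) ≤ _
        rw [← ENNReal.mul_le_mul_iff_right (ENNReal.ofReal_pos.2 hK).ne'
          ENNReal.ofReal_ne_top, ← ENNReal.ofReal_mul hK.le, mul_div_cancel₀ _ hK.ne']
        exact hx.trans (hM x)
    _ ≤ (∫⁻ x, localL2Norm f r x * localL2Norm g r x) / ENNReal.ofReal (lam / K) :=
        meas_ge_le_lintegral_div
          ((measurable_localL2Norm hf r).mul (measurable_localL2Norm hg r)).aemeasurable
          (ENNReal.ofReal_pos.2 ht).ne' ENNReal.ofReal_ne_top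
    _ ≤ ENNReal.ofReal (2 * r) * (eLpNorm f 2 volume * eLpNorm g 2 volume) /
          ENNReal.ofReal (lam / K) := by
        gcongr
        exact lintegral_localL2Norm_mul_le hf hg r
    _ = _ := by
        rw [div_eq_mul_inv, mul_right_comm, ← div_eq_mul_inv, ← ENNReal.ofReal_div_of_pos ht]
        congr 2
        field_simp

noncomputable def planeRotation (θ : ℝ) : ℝ × ℝ →ₗ[ℝ] ℝ × ℝ :=
  Matrix.toLin (.finTwoProd ℝ) (.finTwoProd ℝ) !![cos θ, -sin θ; sin θ, cos θ]

lemma planeRotation_apply (θ : ℝ) (q : ℝ × ℝ) :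
    planeRotation θ q = (q.1 * cos θ - q.2 * sin θ, q.1 * sin θ + q.2 * cos θ) := by
  rw [planeRotation, Matrix.toLin_finTwoProd_apply]; ext <;> simp only <;> ring

lemma det_planeRotation (θ : ℝ) : LinearMap.det (planeRotation θ) = 1 := by
  rw [planeRotation, LinearMap.det_toLin, Matrix.det_fin_two_of]
  linear_combination cos_sq_add_sin_sq θ

lemma rect_eq_image (c : ℝ × ℝ) (θ a b : ℝ) :
    rect c θ a b =
      (c + ·) '' (planeRotation θ '' Icc (-(a / 2)) (a / 2) ×ˢ Icc (-(b / 2)) (b / 2)) := by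
  ext p
  simp only [rect, image_image, mem_image, mem_prod, mem_Icc, ← abs_le, Prod.exists,
    planeRotation_apply]
  constructor
  · rintro ⟨s, t, hs, ht, rfl⟩
    exact ⟨s, t, ⟨hs, ht⟩, by ext <;> simp only [Prod.fst_add, Prod.snd_add] <;> ring⟩
  · rintro ⟨s, t, ⟨hs, ht⟩, rfl⟩
    exact ⟨s, t, hs, ht, by ext <;> simp only [Prod.fst_add, Prod.snd_add] <;> ring⟩

lemma volume_rect (c : ℝ × ℝ) (θ a b : ℝ) :
    volume (rect c θ a b) = ENNReal.ofReal a * ENNReal.ofReal b := by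
  rw [rect_eq_image, image_add_left, measure_preimage_add, Measure.addHaar_image_linearMap,
    det_planeRotation, Measure.volume_eq_prod, Measure.prod_prod, Real.volume_Icc, Real.volume_Icc]
  ring_nf
  simp

lemma isCompact_rect (c : ℝ × ℝ) (θ a b : ℝ) : IsCompact (rect c θ a b) := by
  rw [rect_eq_image, image_image]
  exact (isCompact_Icc.prod isCompact_Icc).image (by fun_prop)

lemma rect_subset_closedBall (c : ℝ × ℝ) (θ a b : ℝ) :
    rect c θ a b ⊆ Metric.closedBall c ((a + b) / 2) := by
  rintro _ ⟨s, t, hs, ht, rfl⟩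
  have key : ∀ u v : ℝ, |u| ≤ 1 → |v| ≤ 1 → |s * u + t * v| ≤ (a + b) / 2 := by
    intro u v hu hv
    calc |s * u + t * v| ≤ |s| * |u| + |t| * |v| := by
          rw [← abs_mul, ← abs_mul]; exact abs_add_le _ _
      _ ≤ a / 2 * 1 + b / 2 * 1 := by gcongr <;> linarith [abs_nonneg s, abs_nonneg t]
      _ = (a + b) / 2 := by ring
  rw [Metric.mem_closedBall, Prod.dist_eq, max_le_iff, Real.dist_eq, Real.dist_eq]
  constructor
  · have := key _ _ (abs_cos_le_one θ) ((abs_neg (sin θ)).trans_le (abs_sin_le_one θ))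
    rwa [show s * cos θ + t * -sin θ = c.1 + s * cos θ - t * sin θ - c.1 by ring] at this
  · have := key _ _ (abs_sin_le_one θ) (abs_cos_le_one θ)
    rwa [show s * sin θ + t * cos θ = c.2 + s * sin θ + t * cos θ - c.2 by ring] at this

lemma abs_rotated_coords_le_of_mem_rect {c : ℝ × ℝ} {θ a b : ℝ} {p : ℝ × ℝ}
    (hp : p ∈ rect c θ a b) :
    |(p.1 - c.1) * cos θ + (p.2 - c.2) * sin θ| ≤ a / 2 ∧
      |(p.2 - c.2) * cos θ - (p.1 - c.1) * sin θ| ≤ b / 2 := by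
  obtain ⟨s, t, hs, ht, rfl⟩ := hp
  constructor
  · convert hs using 2
    linear_combination s * sin_sq_add_cos_sq θ
  · convert ht using 2
    linear_combination t * sin_sq_add_cos_sq θ

lemma volume_le_of_abs_affine_le {s : Set ℝ} {u v r : ℝ} (hu : u ≠ 0)
    (h : ∀ t ∈ s, |u * t + v| ≤ r) : volume s ≤ ENNReal.ofReal (2 * r / |u|) := by
  have hs : s ⊆ (u * ·) ⁻¹' ((· + v) ⁻¹' Metric.closedBall 0 r) := fun t ht => by
    rw [mem_preimage, mem_preimage, Metric.mem_closedBall, Real.dist_eq, sub_zero]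
    exact h t ht
  calc volume s ≤ _ := measure_mono hs
    _ = ENNReal.ofReal (2 * r / |u|) := by
      rw [Real.volume_preimage_mul_left hu, measure_preimage_add_right, Real.volume_closedBall,
        ← ENNReal.ofReal_mul (abs_nonneg _), abs_inv, inv_mul_eq_div]

lemma ofReal_mul_ofReal_le_of_half_le_sq {u a b : ℝ} (hu : 1 / 2 ≤ u ^ 2) (ha : 0 ≤ a)
    (hb : 0 ≤ b) :
    ENNReal.ofReal (2 * (a / 2) / |u|) * ENNReal.ofReal (2 * (b / 2) / |u|) ≤
      ENNReal.ofReal (2 * a * b) := by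
  have hu0 : 0 < |u| := abs_pos.2 (by rintro rfl; norm_num at hu)
  rw [← ENNReal.ofReal_mul (by positivity)]
  refine ENNReal.ofReal_le_ofReal ?_
  rw [show 2 * (a / 2) / |u| * (2 * (b / 2) / |u|) = a * b / u ^ 2 by
    rw [← sq_abs u]; field_simp]
  rw [div_le_iff₀ (by positivity)]
  nlinarith [mul_nonneg ha hb]

lemma exists_rect_slice_bounds (c : ℝ × ℝ) (θ : ℝ) {a b : ℝ} (ha : 0 ≤ a) (hb : 0 ≤ b) :
    ∃ ℓ₁ ℓ₂ : ℝ≥0∞, ℓ₁ * ℓ₂ ≤ ENNReal.ofReal (2 * a * b) ∧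
      (∀ y, volume (Prod.mk y ⁻¹' rect c θ a b) ≤ ℓ₁) ∧
      ∀ z, volume ((·, z) ⁻¹' rect c θ a b) ≤ ℓ₂ := by
  rcases le_total (1 / 2) (sin θ ^ 2) with hsin | hsin
  · have hsin0 : sin θ ≠ 0 := by rintro h; norm_num [h] at hsin
    refine ⟨_, _, ofReal_mul_ofReal_le_of_half_le_sq hsin ha hb, fun y => ?_, fun z => ?_⟩
    · refine volume_le_of_abs_affine_le (v := (y - c.1) * cos θ - c.2 * sin θ) hsin0
        fun t ht => ?_
      convert (abs_rotated_coords_le_of_mem_rect ht).1 using 2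
      ring
    · rw [← abs_neg]
      refine volume_le_of_abs_affine_le (v := (z - c.2) * cos θ + c.1 * sin θ)
        (neg_ne_zero.2 hsin0) fun t ht => ?_
      convert (abs_rotated_coords_le_of_mem_rect ht).2 using 2
      ring
  · have hcos : 1 / 2 ≤ cos θ ^ 2 := by linarith [sin_sq_add_cos_sq θ]
    have hcos0 : cos θ ≠ 0 := by rintro h; norm_num [h] at hcos
    refine ⟨_, _, mul_comm (ENNReal.ofReal _) _ ▸ ofReal_mul_ofReal_le_of_half_le_sq hcos ha hb,
      fun y => ?_, fun z => ?_⟩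
    · refine volume_le_of_abs_affine_le (v := -(y - c.1) * sin θ - c.2 * cos θ) hcos0
        fun t ht => ?_
      convert (abs_rotated_coords_le_of_mem_rect ht).2 using 2
      ring
    · refine volume_le_of_abs_affine_le (v := (z - c.2) * sin θ - c.1 * cos θ) hcos0
        fun t ht => ?_
      convert (abs_rotated_coords_le_of_mem_rect ht).1 using 2
      ring

lemma setLIntegral_rect_mul_le (c : ℝ × ℝ) (θ : ℝ) {a b : ℝ} (ha : 0 ≤ a) (hb : 0 ≤ b)
    {F G : ℝ → ℝ≥0∞} (hF : Measurable F) (hG : Measurable G) :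
    ∫⁻ p in rect c θ a b, F p.1 * G p.2 ≤ ENNReal.ofReal (2 * a * b) ^ (1 / 2 : ℝ) *
      (eLpNorm F 2 (volume.restrict (Metric.closedBall c.1 ((a + b) / 2))) *
        eLpNorm G 2 (volume.restrict (Metric.closedBall c.2 ((a + b) / 2)))) := by
  obtain ⟨ℓ₁, ℓ₂, hℓ, h₁, h₂⟩ := exists_rect_slice_bounds c θ ha hb
  have hsub : rect c θ a b ⊆ Metric.closedBall c.1 ((a + b) / 2) ×ˢ
      Metric.closedBall c.2 ((a + b) / 2) := by
    rw [closedBall_prod_same]; exact rect_subset_closedBall c θ a b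
  refine (setLIntegral_mul_le_of_slices (μ := volume) (ν := volume)
    (isCompact_rect c θ a b).isClosed.measurableSet hsub h₁ h₂ hF hG).trans ?_
  gcongr

lemma kakeyaMax_le {δ : ℝ} (hδ : 0 < δ) (hδ1 : δ ≤ 1) (Ω : Set ℝ) {f g : ℝ → ℂ}
    (hf : Measurable f) (hg : Measurable g) (x : ℝ) :
    kakeyaMax Ω δ f g x ≤ ENNReal.ofReal √(2 / δ) * (localL2Norm f 1 x * localL2Norm g 1 x) := by
  have hconst : ENNReal.ofReal (2 * 1 * δ) ^ (1 / 2 : ℝ) / ENNReal.ofReal δ =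
      ENNReal.ofReal √(2 / δ) := by
    rw [ENNReal.ofReal_rpow_of_nonneg (by positivity) (by norm_num), ← Real.sqrt_eq_rpow,
      ← ENNReal.ofReal_div_of_pos hδ]
    congr 1
    rw [Real.sqrt_div' _ hδ.le, div_eq_div_iff hδ.ne' (by positivity), mul_one,
      Real.sqrt_mul' _ hδ.le, mul_assoc, Real.mul_self_sqrt hδ.le]
  refine iSup₂_le fun θ _ => ?_
  calc avgOn (rect (x, x) θ 1 δ) (fun p => (‖f p.1 * g p.2‖₊ : ℝ≥0∞))
      = (∫⁻ p in rect (x, x) θ 1 δ, ‖f p.1‖ₑ * ‖g p.2‖ₑ) / ENNReal.ofReal δ := by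
        simp [avgOn, volume_rect, enorm_eq_nnnorm]
    _ ≤ ENNReal.ofReal (2 * 1 * δ) ^ (1 / 2 : ℝ) * (localL2Norm f 1 x * localL2Norm g 1 x) /
          ENNReal.ofReal δ := by
        gcongr
        refine (setLIntegral_rect_mul_le (x, x) θ zero_le_one hδ.le hf.enorm hg.enorm).trans ?_
        rw [eLpNorm_enorm, eLpNorm_enorm]
        unfold localL2Norm
        gcongr <;> linarith
    _ = _ := by rw [div_eq_mul_inv, mul_right_comm, ← div_eq_mul_inv, hconst]

/-- Weak-type bound with the trivial dependence on δ (Remark after Theorem 1): the bilinear Kakeya maximal operator `𝔐_δ` maps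
`L²(ℝ) × L²(ℝ)` to `L^{1,∞}(ℝ)` with operator bound `O(δ^{-1/2})`,
uniformly over `δ`-separated sets of directions `Ω`. -/
theorem bilinear_kakeya_weak_type_trivial :
    ∃ C : ℝ, 0 < C ∧
      ∀ δ : ℝ, δ ∈ Set.Ioo (0 : ℝ) 1 →
      ∀ Ω : Set ℝ, (∀ θ ∈ Ω, ∀ θ' ∈ Ω, θ ≠ θ' → δ ≤ |θ - θ'|) →
      ∀ f g : SchwartzMap ℝ ℂ, ∀ lam : ℝ, 0 < lam →
        volume {x : ℝ | ENNReal.ofReal lam ≤ kakeyaMax Ω δ (⇑f) (⇑g) x} ≤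
          ENNReal.ofReal (C / Real.sqrt δ / lam) *
            (eLpNorm (⇑f) 2 volume * eLpNorm (⇑g) 2 volume) := by
  refine ⟨2 * √2, by positivity, ?_⟩
  rintro δ ⟨hδ0, hδ1⟩ Ω - f g lam hlam
  have hf : Measurable f := f.continuous.measurable
  have hg : Measurable g := g.continuous.measurable
  convert volume_le_of_le_localL2Norm_mul hf hg (by positivity)
    (kakeyaMax_le hδ0 hδ1.le Ω hf hg) hlam using 3
  rw [Real.sqrt_div' _ hδ0.le]
  ring
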